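/- arXiv:1103.4946 — 3 statements merged into one kernel-verified Lean document; each statement's English description precedes it below -/
import Mathlib

section
/- Over the field ℚ(t), the polynomial p(X) = (8t³+12t²+8t+4)X⁴ - (4t⁵+6t⁴-12t³-32t²-22t-12)X³ - (12t⁵+17t⁴-4t³-40t²-27t-14)X² - (13t⁵+9t⁴-9t³-48t²-34t-12)X - 4t⁵+3t⁴+13t³+32t²+25t+10 is irreducible of degree 4. -/
/-!
Clearing the leading coefficient `a₄ = 8t³ + 12t² + 8t + 4` by `X ↦ X / a₄` turns the quartic into
a monic quartic with coefficients in `ℚ[t]`. By Gauss's lemma it suffices to show that this monic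
polynomial is irreducible over `ℚ[t]`, and for that it suffices that its specialization at `t = 3`,
a monic quartic over `ℤ`, is irreducible modulo `17`. There it is `X⁴ + 14X³ + X² + 11X + 13`, which
has no root and no monic quadratic factor in `𝔽₁₇`: a finite check.
-/

open Polynomial

namespace Polynomial

section CommRing

variable {R S : Type*} [CommRing R] [CommRing S]

noncomputable def quartic (a₄ a₃ a₂ a₁ a₀ : R) : R[X] :=
  C a₄ * X ^ 4 + C a₃ * X ^ 3 + C a₂ * X ^ 2 + C a₁ * X + C a₀

theorem map_quartic (f : R →+* S) (a₄ a₃ a₂ a₁ a₀ : R) :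
    (quartic a₄ a₃ a₂ a₁ a₀).map f = quartic (f a₄) (f a₃) (f a₂) (f a₁) (f a₀) := by
  simp [quartic]

theorem eval_quartic (a₄ a₃ a₂ a₁ a₀ x : R) :
    (quartic a₄ a₃ a₂ a₁ a₀).eval x = a₄ * x ^ 4 + a₃ * x ^ 3 + a₂ * x ^ 2 + a₁ * x + a₀ := by
  simp [quartic]

theorem monic_quartic_one [Nontrivial R] (a₃ a₂ a₁ a₀ : R) : (quartic 1 a₃ a₂ a₁ a₀).Monic := by
  unfold quartic
  monicity!

theorem natDegree_quartic [Nontrivial R] [NoZeroDivisors R] {a₄ a₃ a₂ a₁ a₀ : R} (ha₄ : a₄ ≠ 0) :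
    (quartic a₄ a₃ a₂ a₁ a₀).natDegree = 4 := by
  unfold quartic
  compute_degree!

theorem quartic_one_eq_mul_add (a₃ a₂ a₁ a₀ b c : R) :
    quartic 1 a₃ a₂ a₁ a₀ =
      (X ^ 2 + C b * X + C c) * (X ^ 2 + C (a₃ - b) * X + C (a₂ - c - b * (a₃ - b))) +
        (C (a₁ - c * (a₃ - b) - b * (a₂ - c - b * (a₃ - b))) * X +
          C (a₀ - c * (a₂ - c - b * (a₃ - b)))) := by
  simp only [quartic, map_sub, map_mul, map_one]
  ring

theorem C_pow_mul_quartic (a₄ a₃ a₂ a₁ a₀ : R) :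
    C (a₄ ^ 3) * quartic a₄ a₃ a₂ a₁ a₀ =
      (quartic 1 a₃ (a₂ * a₄) (a₁ * a₄ ^ 2) (a₀ * a₄ ^ 3)).comp (C a₄ * X) := by
  simp only [quartic, add_comp, mul_comp, C_comp, X_comp, pow_comp, one_comp, map_mul, map_pow,
    map_one]
  ring

/-- `hquad` says that the remainder of `quartic 1 a₃ a₂ a₁ a₀` modulo `X² + bX + c`
(see `quartic_one_eq_mul_add`) never vanishes. Over a finite ring both hypotheses are decidable. -/
theorem irreducible_quartic_one [IsDomain R] {a₃ a₂ a₁ a₀ : R}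
    (hroot : ∀ x, x ^ 4 + a₃ * x ^ 3 + a₂ * x ^ 2 + a₁ * x + a₀ ≠ 0)
    (hquad : ∀ b c, a₁ - c * (a₃ - b) - b * (a₂ - c - b * (a₃ - b)) ≠ 0 ∨
      a₀ - c * (a₂ - c - b * (a₃ - b)) ≠ 0) :
    Irreducible (quartic 1 a₃ a₂ a₁ a₀) := by
  have hdeg₄ : (quartic 1 a₃ a₂ a₁ a₀).natDegree = 4 := natDegree_quartic one_ne_zero
  have hne : quartic 1 a₃ a₂ a₁ a₀ ≠ 1 := fun h ↦ by simp [h] at hdeg₄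
  refine ((monic_quartic_one a₃ a₂ a₁ a₀).irreducible_iff_lt_natDegree_lt hne).mpr
    fun q hq hdeg hdvd ↦ ?_
  rw [hdeg₄] at hdeg
  obtain hlin | hquadratic : q.natDegree = 1 ∨ q.natDegree = 2 := by simp at hdeg; omega
  · obtain ⟨r, rfl⟩ := isMonicOfDegree_one_iff.mp ⟨hlin, hq⟩
    have hr : (quartic 1 a₃ a₂ a₁ a₀).IsRoot (-r) := by
      rwa [← dvd_iff_isRoot, map_neg, sub_neg_eq_add]
    exact hroot (-r) (by simpa [eval_quartic] using hr)
  · obtain ⟨b, c, rfl⟩ := isMonicOfDegree_two_iff.mp ⟨hquadratic, hq⟩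
    set q₀ := a₂ - c - b * (a₃ - b)
    have hrem : X ^ 2 + C b * X + C c ∣ C (a₁ - c * (a₃ - b) - b * q₀) * X + C (a₀ - c * q₀) := by
      rw [quartic_one_eq_mul_add a₃ a₂ a₁ a₀ b c] at hdvd
      exact (dvd_add_right (dvd_mul_right _ _)).mp hdvd
    have hzero := eq_zero_of_dvd_of_natDegree_lt hrem
      (by rw [hquadratic]; exact natDegree_linear_le.trans_lt one_lt_two)
    refine (hquad b c).elim (fun h ↦ h ?_) (fun h ↦ h ?_)
    · simpa using congrArg (coeff · 1) hzero
    · simpa using congrArg (coeff · 0) hzero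

end CommRing

theorem irreducible_quartic_of_irreducible_quartic_one {K : Type*} [Field K]
    {a₄ a₃ a₂ a₁ a₀ : K} (ha₄ : a₄ ≠ 0)
    (h : Irreducible (quartic 1 a₃ (a₂ * a₄) (a₁ * a₄ ^ 2) (a₀ * a₄ ^ 3))) :
    Irreducible (quartic a₄ a₃ a₂ a₁ a₀) := by
  let := invertibleOfNonzero ha₄
  have hscaled : Irreducible (C (a₄ ^ 3) * quartic a₄ a₃ a₂ a₁ a₀) := by
    have := (MulEquiv.irreducible_iff (algEquivCMulXAddC a₄ 0)).mpr h
    rwa [algEquivCMulXAddC_apply, map_zero, add_zero, ← comp_eq_aeval, ← C_pow_mul_quartic] at this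
  exact (irreducible_isUnit_mul (isUnit_C.mpr ((IsUnit.mk0 _ ha₄).pow 3))).mp hscaled

theorem Monic.irreducible_map_fraction_of_irreducible_map {R K S : Type*} [CommRing R]
    [IsDomain R] [IsIntegrallyClosed R] [Field K] [Algebra R K] [IsFractionRing R K] [CommRing S]
    [IsDomain S] {f : R[X]} (hf : f.Monic) (φ : R →+* S) (h : Irreducible (f.map φ)) :
    Irreducible (f.map (algebraMap R K)) :=
  hf.irreducible_iff_irreducible_map_fraction_map.mp (hf.irreducible_of_irreducible_map φ f h)

end Polynomial

namespace X0_58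

variable {R S : Type*} [CommRing R] [CommRing S]

def a₄ (t : R) : R := 8 * t ^ 3 + 12 * t ^ 2 + 8 * t + 4
def a₃ (t : R) : R := -(4 * t ^ 5 + 6 * t ^ 4 - 12 * t ^ 3 - 32 * t ^ 2 - 22 * t - 12)
def a₂ (t : R) : R := -(12 * t ^ 5 + 17 * t ^ 4 - 4 * t ^ 3 - 40 * t ^ 2 - 27 * t - 14)
def a₁ (t : R) : R := -(13 * t ^ 5 + 9 * t ^ 4 - 9 * t ^ 3 - 48 * t ^ 2 - 34 * t - 12)
def a₀ (t : R) : R := -4 * t ^ 5 + 3 * t ^ 4 + 13 * t ^ 3 + 32 * t ^ 2 + 25 * t + 10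

noncomputable def monicModel (t : R) : R[X] :=
  quartic 1 (a₃ t) (a₂ t * a₄ t) (a₁ t * a₄ t ^ 2) (a₀ t * a₄ t ^ 3)

theorem monic_monicModel [Nontrivial R] (t : R) : (monicModel t).Monic :=
  monic_quartic_one _ _ _ _

theorem map_a₄ (f : R →+* S) (t : R) : f (a₄ t) = a₄ (f t) := by
  simp only [a₄, map_add, map_mul, map_pow, map_ofNat]

theorem map_monicModel (f : R →+* S) (t : R) : (monicModel t).map f = monicModel (f t) := by
  simp only [monicModel, map_quartic, a₄, a₃, a₂, a₁, a₀, map_add, map_sub, map_mul, map_pow,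
    map_neg, map_one, map_ofNat]

theorem irreducible_monicModel_three_zmod : Irreducible (monicModel (3 : ZMod 17)) := by
  have : Fact (Nat.Prime 17) := ⟨by norm_num⟩
  apply irreducible_quartic_one
  · decide
  · decide

theorem irreducible_monicModel_three : Irreducible (monicModel (3 : ℚ)) := by
  have : Fact (Nat.Prime 17) := ⟨by norm_num⟩
  have h := (monic_monicModel (3 : ℤ)).irreducible_map_fraction_of_irreducible_map (K := ℚ)
    (Int.castRingHom (ZMod 17))
    (by rw [map_monicModel, map_ofNat]; exact irreducible_monicModel_three_zmod)
  rwa [map_monicModel, map_ofNat] at h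

theorem irreducible_monicModel_X : Irreducible (monicModel (RatFunc.X : RatFunc ℚ)) := by
  have h := (monic_monicModel (X : ℚ[X])).irreducible_map_fraction_of_irreducible_map
    (K := RatFunc ℚ) (evalRingHom 3)
    (by rw [map_monicModel, coe_evalRingHom, eval_X]; exact irreducible_monicModel_three)
  rwa [map_monicModel, RatFunc.algebraMap_X] at h

theorem a₄_X_ne_zero : a₄ (RatFunc.X : RatFunc ℚ) ≠ 0 := by
  rw [← RatFunc.algebraMap_X, ← map_a₄, map_ne_zero_iff _ (IsFractionRing.injective ℚ[X] _)]
  intro h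
  simpa [a₄] using congrArg (eval 0) h

end X0_58

/-- Over `ℚ(t)`, the quartic
`(8t³+12t²+8t+4)X⁴ - (4t⁵+6t⁴-12t³-32t²-22t-12)X³ - (12t⁵+17t⁴-4t³-40t²-27t-14)X²
 - (13t⁵+9t⁴-9t³-48t²-34t-12)X - 4t⁵+3t⁴+13t³+32t²+25t+10`
is irreducible of degree 4. -/
theorem stmt9 :
    let t : RatFunc ℚ := RatFunc.X
    let p : Polynomial (RatFunc ℚ) :=
      C (8*t^3 + 12*t^2 + 8*t + 4) * X^4
        - C (4*t^5 + 6*t^4 - 12*t^3 - 32*t^2 - 22*t - 12) * X^3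
        - C (12*t^5 + 17*t^4 - 4*t^3 - 40*t^2 - 27*t - 14) * X^2
        - C (13*t^5 + 9*t^4 - 9*t^3 - 48*t^2 - 34*t - 12) * X
        + C (-4*t^5 + 3*t^4 + 13*t^3 + 32*t^2 + 25*t + 10)
    Irreducible p ∧ p.natDegree = 4 := by
  intro t p
  have hp : p = quartic (X0_58.a₄ t) (X0_58.a₃ t) (X0_58.a₂ t) (X0_58.a₁ t) (X0_58.a₀ t) := by
    simp only [p, quartic, X0_58.a₄, X0_58.a₃, X0_58.a₂, X0_58.a₁, X0_58.a₀, map_neg]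
    ring
  rw [hp]
  exact ⟨irreducible_quartic_of_irreducible_quartic_one X0_58.a₄_X_ne_zero
      X0_58.irreducible_monicModel_X,
    natDegree_quartic X0_58.a₄_X_ne_zero⟩
end

section
/- Let F(X,Y) = Y⁵ - Y⁴X² - 2Y⁴X - 10Y⁴ + Y³X³ + 11Y³X² + 9Y³X + 33Y³ - Y²X⁴ - 2Y²X³ - 36Y²X² - 10Y²X - 37Y² + 3YX⁵ + 22YX⁴ + 12YX³ + 36YX² + 6YX + 17Y - 2X⁶ + 2X⁵ - 3X⁴ + 4X³ - 3X² + 2X - 2. Then F is irreducible as a polynomial in ℚ[X,Y]. -/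
open MvPolynomial

/-!
`F` is monic of degree 5 in `Y`, so by the monic-specialization criterion it is irreducible as
soon as `F(0, Y) = Y⁵ - 10Y⁴ + 33Y³ - 37Y² + 17Y - 2` is irreducible over `ℚ`. By Gauss's lemma
it suffices to see this over `ℤ`, and for that modulo `3`. Over a finite field `𝔽_q`, every
irreducible polynomial whose degree divides `n` divides `Y^(q^n) - Y`, so a quintic coprime to
`Y⁹ - Y` has no factor of degree 1 or 2; here coprimality is witnessed by an explicit
Bézout identity.
-/

section
open Polynomial

local notation "Y" => Polynomial.X

theorem Polynomial.irreducible_of_isCoprime_X_pow_card_pow_sub_X {K : Type*} [Field K] [Finite K]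
    {f : K[X]} {n : ℕ} (hf : 0 < f.natDegree) (hn : ∀ d, 0 < d → d ≤ f.natDegree / 2 → d ∣ n)
    (hcop : IsCoprime f (Y ^ Nat.card K ^ n - Y)) : Irreducible f := by
  have hf0 : f ≠ 0 := ne_zero_of_natDegree_gt hf
  rw [irreducible_iff_degree_lt f hf0 (not_isUnit_of_natDegree_pos f hf)]
  intro q hq hqf
  by_contra hu
  have hq0 : q ≠ 0 := ne_zero_of_dvd_ne_zero hf0 hqf
  obtain ⟨g, hg, hgq⟩ := WfDvdMonoid.exists_irreducible_factor hu hq0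
  have hgdeg : g.natDegree ≤ f.natDegree / 2 :=
    (natDegree_le_of_dvd hgq hq0).trans (natDegree_le_of_degree_le hq)
  have hgX : g ∣ Y ^ Nat.card K ^ n - Y :=
    hg.natDegree_dvd_iff_dvd_X_pow_card_pow_sub_X.mp (hn _ hg.natDegree_pos hgdeg)
  exact hg.not_isUnit (hcop.isUnit_of_dvd' (hgq.trans hqf) hgX)

noncomputable def quintic : ℤ[X] := Y ^ 5 - 10 * Y ^ 4 + 33 * Y ^ 3 - 37 * Y ^ 2 + 17 * Y - 2

theorem quintic_monic : quintic.Monic := by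
  unfold quintic
  monicity!

theorem quintic_natDegree : quintic.natDegree = 5 := by
  unfold quintic
  compute_degree!

theorem irreducible_map_quintic_zmod_three :
    Irreducible (quintic.map (Int.castRingHom (ZMod 3))) := by
  have hdeg : (quintic.map (Int.castRingHom (ZMod 3))).natDegree = 5 := by
    rw [quintic_monic.natDegree_map, quintic_natDegree]
  refine irreducible_of_isCoprime_X_pow_card_pow_sub_X (n := 2) (by omega)
    (by rw [hdeg]; intro d hd hd2; interval_cases d <;> norm_num) ?_
  refine ⟨1 - Y ^ 3 - Y ^ 4 - Y ^ 6 + Y ^ 7, -(1 + Y + Y ^ 2 + Y ^ 3), ?_⟩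
  simp only [quintic, Nat.card_zmod, Polynomial.map_sub, Polynomial.map_add, Polynomial.map_mul,
    Polynomial.map_pow, Polynomial.map_ofNat, Polynomial.map_X]
  ring_nf
  reduce_mod_char

theorem irreducible_quintic : Irreducible quintic :=
  haveI : Fact (Nat.Prime 3) := ⟨Nat.prime_three⟩
  quintic_monic.irreducible_of_irreducible_map _ _ irreducible_map_quintic_zmod_three

theorem irreducible_map_quintic_rat : Irreducible (quintic.map (Int.castRingHom ℚ)) :=
  (IsPrimitive.Int.irreducible_iff_irreducible_map_cast quintic_monic.isPrimitive).mp
    irreducible_quintic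

theorem MvPolynomial.exists_algEquiv_polynomial_fin_two (R : Type*) [CommRing R] :
    ∃ e : MvPolynomial (Fin 2) R ≃ₐ[R] (MvPolynomial (Fin 1) R)[X],
      e (MvPolynomial.X 0) = Polynomial.C (MvPolynomial.X 0) ∧ e (MvPolynomial.X 1) = Y := by
  refine ⟨(renameEquiv R (Equiv.swap 0 1)).trans (finSuccEquiv R 1), ?_, ?_⟩
  · simpa using finSuccEquiv_X_succ (R := R) (n := 1) (j := 0)
  · simp [finSuccEquiv_X_zero]

end

/-- The degree 6 plane model of the genus 6 modular curve
`X₀(58)` has irreducible defining polynomial `F(X,Y) ∈ ℚ[X,Y]`. -/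
theorem stmt10 :
    let x : MvPolynomial (Fin 2) ℚ := X 0
    let y : MvPolynomial (Fin 2) ℚ := X 1
    let F : MvPolynomial (Fin 2) ℚ :=
      y^5 - y^4*x^2 - 2*y^4*x - 10*y^4 + y^3*x^3 + 11*y^3*x^2 + 9*y^3*x
        + 33*y^3 - y^2*x^4 - 2*y^2*x^3 - 36*y^2*x^2 - 10*y^2*x - 37*y^2
        + 3*y*x^5 + 22*y*x^4 + 12*y*x^3 + 36*y*x^2 + 6*y*x + 17*y
        - 2*x^6 + 2*x^5 - 3*x^4 + 4*x^3 - 3*x^2 + 2*x - 2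
    Irreducible F := by
  intro x y F
  obtain ⟨e, hx, hy⟩ := exists_algEquiv_polynomial_fin_two ℚ
  set G := e F with hG
  simp only [F, x, y, map_sub, map_add, map_mul, map_pow, map_ofNat, hx, hy] at hG
  have hmonic : G.Monic := by
    rw [hG]
    monicity!
  have hspec : G.map (eval 0) = quintic.map (Int.castRingHom ℚ) := by
    rw [hG]
    simp [quintic]
  exact (MulEquiv.irreducible_iff e).mp
    (hmonic.irreducible_of_irreducible_map _ _ (hspec ▸ irreducible_map_quintic_rat))
end

section
/- Let k be an algebraically closed field and M a 2×3 matrix of linear forms in k[x_1,...,x_6] whose three maximal 2×2 minors Q_1, Q_2, Q_3 are linearly independent and such that every nonzero element of the k-span of Q_1, Q_2, Q_3 is an irreducible quadratic form. Then M is 1-generic: for all invertible matrices U ∈ GL_2(k), V ∈ GL_3(k), every entry of UMV is a nonzero linear form. -/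
/-!
If an entry of `U M V` vanished, some maximal minor of `U M V` would be, up to sign, a product
of two linear forms, hence reducible. But by Cauchy–Binet the maximal minors of `U M V` are
obtained from those of `M` by `det U` times the matrix of 2×2 minors of `V`, whose determinant is
`det U ^ 3 * det V ^ 2`; so they are nonzero elements of the span of the minors of `M`, hence
irreducible.
-/

open MvPolynomial

/-- The 2×2 minor of a 2×3 matrix obtained by deleting column `i`
(columns kept in their natural order). -/
def minorDel {R : Type} [CommRing R] (M : Matrix (Fin 2) (Fin 3) R) : Fin 3 → R
  | 0 => M 0 1 * M 1 2 - M 0 2 * M 1 1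
  | 1 => M 0 0 * M 1 2 - M 0 2 * M 1 0
  | 2 => M 0 0 * M 1 1 - M 0 1 * M 1 0

section CommRing

variable {R : Type} [CommRing R]

def unsignedMinor (V : Matrix (Fin 3) (Fin 3) R) (s t : Fin 3) : R :=
  (V.submatrix s.succAbove t.succAbove).det

lemma minorDel_mul_mul (U : Matrix (Fin 2) (Fin 2) R) (M : Matrix (Fin 2) (Fin 3) R)
    (V : Matrix (Fin 3) (Fin 3) R) (t : Fin 3) :
    minorDel (U * M * V) t = U.det * ∑ s, unsignedMinor V s t * minorDel M s := by
  fin_cases t <;>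
    simp [minorDel, unsignedMinor, Matrix.mul_apply, Matrix.det_fin_two, Fin.sum_univ_succ,
      Fin.succAbove] <;>
    ring

lemma det_of_unsignedMinor (V : Matrix (Fin 3) (Fin 3) R) :
    (Matrix.of (unsignedMinor V)).det = V.det ^ 2 := by
  simp [Matrix.det_fin_three, unsignedMinor, Matrix.det_fin_two, Fin.succAbove]
  ring

lemma unsignedMinor_map {S : Type} [CommRing S] (f : R →+* S) (V : Matrix (Fin 3) (Fin 3) R)
    (s t : Fin 3) : unsignedMinor (V.map f) s t = f (unsignedMinor V s t) := by
  simp [unsignedMinor, f.map_det, Matrix.submatrix_map]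

lemma exists_minorDel_associated_mul_of_eq_zero {N : Matrix (Fin 2) (Fin 3) R} {i : Fin 2}
    {j : Fin 3} (h : N i j = 0) :
    ∃ t a b c d, Associated (minorDel N t) (N a b * N c d) := by
  fin_cases i <;> fin_cases j <;> simp only [Fin.zero_eta, Fin.mk_one, Fin.reduceFinMk] at h
  · exact ⟨1, 0, 2, 1, 0, by simp [minorDel, h]⟩
  · exact ⟨0, 0, 2, 1, 1, by simp [minorDel, h]⟩
  · exact ⟨0, 0, 1, 1, 2, by simp [minorDel, h]⟩
  · exact ⟨1, 0, 0, 1, 2, by simp [minorDel, h]⟩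
  · exact ⟨0, 0, 1, 1, 2, by simp [minorDel, h]⟩
  · exact ⟨0, 0, 2, 1, 1, by simp [minorDel, h]⟩

end CommRing

section Algebra

variable {k A : Type} [CommRing k] [CommRing A] [Algebra k A]

lemma minorDel_map_mul_mul (U : Matrix (Fin 2) (Fin 2) k) (M : Matrix (Fin 2) (Fin 3) A)
    (V : Matrix (Fin 3) (Fin 3) k) (t : Fin 3) :
    minorDel (U.map (algebraMap k A) * M * V.map (algebraMap k A)) t =
      ∑ s, (U.det * unsignedMinor V s t) • minorDel M s := by
  rw [minorDel_mul_mul, ← RingHom.mapMatrix_apply, ← RingHom.map_det, Finset.mul_sum]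
  simp only [unsignedMinor_map, Algebra.smul_def, map_mul, mul_assoc]

lemma minorDel_map_mul_mul_mem_span (U : Matrix (Fin 2) (Fin 2) k) (M : Matrix (Fin 2) (Fin 3) A)
    (V : Matrix (Fin 3) (Fin 3) k) (t : Fin 3) :
    minorDel (U.map (algebraMap k A) * M * V.map (algebraMap k A)) t ∈
      Submodule.span k (Set.range (minorDel M)) := by
  rw [minorDel_map_mul_mul]
  exact Submodule.sum_mem _ fun s _ => Submodule.smul_mem _ _ (Submodule.subset_span ⟨s, rfl⟩)

lemma minorDel_map_mul_mul_ne_zero [IsDomain k] {U : Matrix (Fin 2) (Fin 2) k}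
    {M : Matrix (Fin 2) (Fin 3) A} {V : Matrix (Fin 3) (Fin 3) k}
    (hM : LinearIndependent k (minorDel M)) (hU : U.det ≠ 0) (hV : V.det ≠ 0) (t : Fin 3) :
    minorDel (U.map (algebraMap k A) * M * V.map (algebraMap k A)) t ≠ 0 := by
  intro h
  rw [minorDel_map_mul_mul] at h
  have hcol : ∀ s, unsignedMinor V s t = 0 := fun s =>
    (mul_eq_zero.mp (Fintype.linearIndependent_iff.mp hM _ h s)).resolve_left hU
  have hdet := Matrix.det_eq_zero_of_column_eq_zero (A := Matrix.of (unsignedMinor V)) t hcol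
  rw [det_of_unsignedMinor] at hdet
  exact hV (pow_eq_zero_iff two_ne_zero |>.mp hdet)

lemma map_mul_mul_apply_mem {S : Submodule k A} (U : Matrix (Fin 2) (Fin 2) k)
    {M : Matrix (Fin 2) (Fin 3) A} (V : Matrix (Fin 3) (Fin 3) k) (hM : ∀ i j, M i j ∈ S)
    (i : Fin 2) (j : Fin 3) :
    (U.map (algebraMap k A) * M * V.map (algebraMap k A)) i j ∈ S := by
  simp only [Matrix.mul_apply, Matrix.map_apply, ← Algebra.commutes (V _ _), ← Algebra.smul_def]
  exact S.sum_mem fun b _ => S.smul_mem _ (S.sum_mem fun a _ => S.smul_mem _ (hM a b))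

end Algebra

namespace MvPolynomial.IsHomogeneous

variable {σ R : Type} [CommRing R] [Nontrivial R]

lemma not_isUnit {p : MvPolynomial σ R} {n : ℕ} (hp : p.IsHomogeneous n) (hn : n ≠ 0) :
    ¬IsUnit p := by
  intro hu
  have h0 : constantCoeff p = 0 := by
    rw [constantCoeff_eq]
    exact hp.coeff_eq_zero (by simpa using hn.symm)
  simpa [h0] using hu.map constantCoeff

lemma not_irreducible_mul {p q : MvPolynomial σ R} {m n : ℕ} (hp : p.IsHomogeneous m)
    (hq : q.IsHomogeneous n) (hm : m ≠ 0) (hn : n ≠ 0) : ¬Irreducible (p * q) := fun h =>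
  (h.isUnit_or_isUnit rfl).elim (hp.not_isUnit hm) (hq.not_isUnit hn)

end MvPolynomial.IsHomogeneous

theorem stmt19_general {k : Type} [Field k]
    (M : Matrix (Fin 2) (Fin 3) (MvPolynomial (Fin 6) k))
    (hM : ∀ i j, (M i j).IsHomogeneous 1)
    (hli : LinearIndependent k (minorDel M))
    (hirr : ∀ q ∈ Submodule.span k (Set.range (minorDel M)),
      q ≠ 0 → Irreducible q) :
    ∀ (U : Matrix (Fin 2) (Fin 2) k) (V : Matrix (Fin 3) (Fin 3) k),
      IsUnit U.det → IsUnit V.det →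
      ∀ (i : Fin 2) (j : Fin 3),
        ((U.map (C : k → MvPolynomial (Fin 6) k)) * M *
          (V.map (C : k → MvPolynomial (Fin 6) k))) i j ≠ 0 := by
  intro U V hU hV i j hzero
  rw [← algebraMap_eq] at hzero
  set N := U.map (algebraMap k (MvPolynomial (Fin 6) k)) * M *
    V.map (algebraMap k (MvPolynomial (Fin 6) k))
  have hN : ∀ a b, (N a b).IsHomogeneous 1 := fun a b =>
    (mem_homogeneousSubmodule _ _).mp <|
      map_mul_mul_apply_mem U V (fun i j => (mem_homogeneousSubmodule _ _).mpr (hM i j)) a b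
  obtain ⟨t, a, b, c, d, hassoc⟩ := exists_minorDel_associated_mul_of_eq_zero hzero
  have hirrN : Irreducible (minorDel N t) :=
    hirr _ (minorDel_map_mul_mul_mem_span U M V t)
      (minorDel_map_mul_mul_ne_zero hli hU.ne_zero hV.ne_zero t)
  exact (hN a b).not_irreducible_mul (hN c d) one_ne_zero one_ne_zero
    (hassoc.irreducible_iff.mp hirrN)

/-- A 2×3 matrix of linear forms whose maximal minors are
linearly independent and span a space all of whose nonzero elements are
irreducible quadrics is 1-generic: for all invertible constant matrices
`U ∈ GL₂(k)`, `V ∈ GL₃(k)`, every entry of `U M V` is nonzero. -/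
theorem stmt19 {k : Type} [Field k] [IsAlgClosed k]
    (M : Matrix (Fin 2) (Fin 3) (MvPolynomial (Fin 6) k))
    (hM : ∀ i j, (M i j).IsHomogeneous 1)
    (hli : LinearIndependent k (minorDel M))
    (hirr : ∀ q ∈ Submodule.span k (Set.range (minorDel M)),
      q ≠ 0 → Irreducible q) :
    ∀ (U : Matrix (Fin 2) (Fin 2) k) (V : Matrix (Fin 3) (Fin 3) k),
      IsUnit U.det → IsUnit V.det →
      ∀ (i : Fin 2) (j : Fin 3),
        ((U.map (C : k → MvPolynomial (Fin 6) k)) * M *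
          (V.map (C : k → MvPolynomial (Fin 6) k))) i j ≠ 0 :=
  stmt19_general M hM hli hirr
end
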